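/- arXiv:2004.00904 — 5 statements merged into one kernel-verified Lean document; each statement's English description precedes it below -/
import Mathlib

section
/- For an odd prime power q and n ≥ 1, given a₁,...,aₙ ∈ F_q all nonzero, the number N of solutions (x₁,...,xₙ) ∈ F_qⁿ to a₁x₁² + ... + aₙxₙ² = 0 satisfies |N − q^{n−1}| ≤ q^{⌊n/2⌋} − q^{⌈(n−2)/2⌉}. -/
/-!
Let `Q x = ∑ aᵢ xᵢ²`, `ψ` a primitive additive character and `η` the quadratic character with
Gauss sum `g`. Orthogonality gives `q N = ∑_t ∑_x ψ (t Q x)`. The `t = 0` term is `q ^ n`; for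
`t ≠ 0` the inner sum factors into quadratic Gauss sums `∑_y ψ (t aᵢ y²) = η (t aᵢ) g`, so the
remaining terms add up to `(∑_{t ≠ 0} η t ^ n) η (∏ aᵢ) g ^ n`. For odd `n` this vanishes and
`N = q ^ (n - 1)`; for `n = 2m` the character sum is `q - 1` and `g² = η (-1) q`, whence
`N = q ^ (n - 1) ± (q - 1) q ^ (m - 1)`.
-/

open Finset

lemma AddChar.map_sum_eq_prod {A M ι : Type*} [AddCommMonoid A] [CommMonoid M]
    (ψ : AddChar A M) (s : Finset ι) (f : ι → A) :
    ψ (∑ i ∈ s, f i) = ∏ i ∈ s, ψ (f i) := by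
  have h := map_prod ψ.toMonoidHom (fun i ↦ Multiplicative.ofAdd (f i)) s
  rwa [← ofAdd_sum] at h

lemma AddChar.sum_sum_apply_mul_eq_card_mul_card {R R' α : Type*} [CommRing R] [Fintype R]
    [DecidableEq R] [CommRing R'] [IsDomain R'] [Fintype α] {ψ : AddChar R R'}
    (hψ : ψ.IsPrimitive) (f : α → R) :
    ∑ t, ∑ x, ψ (t * f x) = Fintype.card R * #{x | f x = 0} := by
  rw [sum_comm, sum_congr rfl fun x _ ↦ AddChar.sum_mulShift (f x) hψ]
  simp only [Nat.cast_ite, Nat.cast_zero]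
  rw [← sum_filter, sum_const, nsmul_eq_mul, mul_comm]

section QuadraticGaussSum

variable {F R' : Type*} [Field F] [Fintype F] [DecidableEq F] [CommRing R'] [IsDomain R']
  {ψ : AddChar F R'}

lemma sum_addChar_mul_sq (hF : ringChar F ≠ 2) (hψ : ψ.IsPrimitive) {b : F} (hb : b ≠ 0) :
    ∑ y, ψ (b * y ^ 2) =
      quadraticChar F b * gaussSum ((quadraticChar F).ringHomComp (Int.castRingHom R')) ψ := by
  set χ := (quadraticChar F).ringHomComp (Int.castRingHom R')
  have hfiber : ∑ y, ψ (b * y ^ 2) = ∑ z, (χ z + 1) * ψ (b * z) := by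
    rw [← sum_fiberwise' univ (· ^ 2) fun z ↦ ψ (b * z)]
    refine sum_congr rfl fun z _ ↦ ?_
    have hcard := quadraticChar_card_sqrts hF z
    rw [Set.toFinset_ofPred] at hcard
    rw [sum_const, nsmul_eq_mul, ← Int.cast_natCast, hcard]
    simp [χ]
  have hχb : χ b * χ b = 1 := by
    rw [← map_mul, ← sq]
    simp [χ, quadraticChar_sq_one' hb]
  have hshift := gaussSum_mulShift χ ψ hb.isUnit.unit
  rw [IsUnit.unit_spec] at hshift
  calc ∑ y, ψ (b * y ^ 2) = ∑ z, χ z * ψ.mulShift b z + ∑ z, ψ (z * b) := by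
        rw [hfiber, ← sum_add_distrib]
        exact sum_congr rfl fun z _ ↦ by rw [AddChar.mulShift_apply, mul_comm z]; ring
    _ = χ b * (χ b * gaussSum χ (ψ.mulShift b)) := by
        rw [AddChar.sum_mulShift _ hψ, if_neg hb, Nat.cast_zero, add_zero, ← mul_assoc, hχb,
          one_mul]
        rfl
    _ = quadraticChar F b * gaussSum χ ψ := by rw [hshift]; rfl

lemma sum_addChar_sum_mul_sq (hF : ringChar F ≠ 2) (hψ : ψ.IsPrimitive) {ι : Type*} [Fintype ι]
    [DecidableEq ι] {b : ι → F} (hb : ∀ i, b i ≠ 0) :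
    ∑ x : ι → F, ψ (∑ i, b i * x i ^ 2) =
      quadraticChar F (∏ i, b i) *
        gaussSum ((quadraticChar F).ringHomComp (Int.castRingHom R')) ψ ^ Fintype.card ι := by
  simp_rw [AddChar.map_sum_eq_prod]
  rw [← Fintype.prod_sum fun i y ↦ ψ (b i * y ^ 2),
    prod_congr rfl fun i _ ↦ sum_addChar_mul_sq hF hψ (hb i), prod_mul_distrib, prod_const,
    card_univ, map_prod, Int.cast_prod]

end QuadraticGaussSum

section DiagonalQuadraticForm

variable {F : Type*} [Field F] [Fintype F] [DecidableEq F]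

lemma quadraticChar_sum_erase_zero_pow_of_even {n : ℕ} (hn : Even n) :
    ∑ t ∈ univ.erase (0 : F), quadraticChar F t ^ n = Fintype.card F - 1 := by
  obtain ⟨m, rfl⟩ := hn
  have hone (t) (ht : t ∈ univ.erase (0 : F)) : quadraticChar F t ^ (m + m) = 1 := by
    rw [← two_mul, pow_mul, quadraticChar_sq_one (ne_of_mem_erase ht), one_pow]
  rw [sum_congr rfl hone, sum_const, card_erase_of_mem (mem_univ _), card_univ, nsmul_one,
    Nat.cast_pred Fintype.card_pos]

lemma quadraticChar_sum_erase_zero_pow_of_odd (hF : ringChar F ≠ 2) {n : ℕ} (hn : Odd n) :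
    ∑ t ∈ univ.erase (0 : F), quadraticChar F t ^ n = 0 := by
  obtain ⟨m, rfl⟩ := hn
  have hself (t) (ht : t ∈ univ.erase (0 : F)) :
      quadraticChar F t ^ (2 * m + 1) = quadraticChar F t := by
    rw [pow_succ, pow_mul, quadraticChar_sq_one (ne_of_mem_erase ht), one_pow, one_mul]
  rw [sum_congr rfl hself, sum_erase _ quadraticChar_zero, quadraticChar_sum_zero hF]

variable {ι : Type*} [Fintype ι] [DecidableEq ι] {a : ι → F}

lemma card_mul_card_zeros_sum_mul_sq {R' : Type*} [CommRing R'] [IsDomain R'] {ψ : AddChar F R'}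
    (hF : ringChar F ≠ 2) (hψ : ψ.IsPrimitive) (ha : ∀ i, a i ≠ 0) :
    Fintype.card F * #{x : ι → F | ∑ i, a i * x i ^ 2 = 0} =
      (Fintype.card F : R') ^ Fintype.card ι +
        ((∑ t ∈ univ.erase (0 : F), quadraticChar F t ^ Fintype.card ι) *
            quadraticChar F (∏ i, a i) : ℤ) *
          gaussSum ((quadraticChar F).ringHomComp (Int.castRingHom R')) ψ ^ Fintype.card ι := by
  rw [← AddChar.sum_sum_apply_mul_eq_card_mul_card hψ, ← add_sum_erase _ _ (mem_univ 0)]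
  congr 1
  · simp
  · push_cast
    rw [sum_mul, sum_mul]
    refine sum_congr rfl fun t ht ↦ ?_
    simp_rw [mul_sum, ← mul_assoc]
    rw [sum_addChar_sum_mul_sq hF hψ fun i ↦ mul_ne_zero (ne_of_mem_erase ht) (ha i),
      prod_mul_distrib, prod_const, card_univ, map_mul, map_pow]
    push_cast
    ring

theorem card_zeros_sum_mul_sq_of_odd (hF : ringChar F ≠ 2) (ha : ∀ i, a i ≠ 0)
    (hι : Odd (Fintype.card ι)) :
    #{x : ι → F | ∑ i, a i * x i ^ 2 = 0} = Fintype.card F ^ (Fintype.card ι - 1) := by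
  have key := card_mul_card_zeros_sum_mul_sq hF
    (AddChar.FiniteField.primitiveChar_to_Complex_isPrimitive F) ha
  rw [quadraticChar_sum_erase_zero_pow_of_odd hF hι, zero_mul, Int.cast_zero, zero_mul,
    add_zero] at key
  have hq : Fintype.card F * #{x : ι → F | ∑ i, a i * x i ^ 2 = 0} =
      Fintype.card F * Fintype.card F ^ (Fintype.card ι - 1) := by
    rw [← pow_succ', Nat.sub_add_cancel hι.pos]
    exact_mod_cast key
  exact Nat.eq_of_mul_eq_mul_left Fintype.card_pos hq

theorem card_zeros_sum_mul_sq_of_even (hF : ringChar F ≠ 2) (ha : ∀ i, a i ≠ 0) {m : ℕ}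
    (hι : Fintype.card ι = 2 * m) :
    Fintype.card F * #{x : ι → F | ∑ i, a i * x i ^ 2 = 0} =
      (Fintype.card F : ℤ) ^ (2 * m) +
        quadraticChar F ((-1) ^ m * ∏ i, a i) * (Fintype.card F - 1) * Fintype.card F ^ m := by
  have hψ := AddChar.FiniteField.primitiveChar_to_Complex_isPrimitive F
  have key := card_mul_card_zeros_sum_mul_sq hF hψ ha
  have hχ := (MulChar.ringHomComp_ne_one_iff (f := Int.castRingHom ℂ) Int.cast_injective).mpr
    (quadraticChar_ne_one hF)
  rw [quadraticChar_sum_erase_zero_pow_of_even ⟨m, by omega⟩, hι, pow_mul (gaussSum _ _),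
    gaussSum_sq hχ ((quadraticChar_isQuadratic F).comp _) hψ] at key
  apply Int.cast_injective (α := ℂ)
  push_cast
  rw [key]
  simp only [MulChar.ringHomComp_apply, Int.coe_castRingHom, map_mul, map_pow]
  push_cast
  ring

end DiagonalQuadraticForm

/-- Number of solutions of a nondegenerate quadratic diagonal equation with
zero right-hand side. -/
theorem stmt_1 (F : Type*) [Field F] [Fintype F] (hq : Odd (Fintype.card F))
    (n : ℕ) (hn : 1 ≤ n) (a : Fin n → F) (ha : ∀ i, a i ≠ 0) :
    |(Set.ncard {x : Fin n → F | ∑ i, a i * x i ^ 2 = 0} : ℤ) -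
        (Fintype.card F : ℤ) ^ (n - 1)| ≤
      (Fintype.card F : ℤ) ^ (n / 2) - (Fintype.card F : ℤ) ^ ((n - 1) / 2) := by
  classical
  have hF : ringChar F ≠ 2 := by
    rw [Ne, FiniteField.even_card_iff_char_two, ← Nat.even_iff, Nat.not_even_iff_odd]
    exact hq
  rw [Set.ncard_eq_toFinset_card', Set.toFinset_ofPred]
  rcases Nat.even_or_odd' n with ⟨m, rfl | rfl⟩
  · obtain ⟨k, rfl⟩ : ∃ k, m = k + 1 := ⟨m - 1, by omega⟩
    rw [show 2 * (k + 1) - 1 = 2 * k + 1 by omega, show 2 * (k + 1) / 2 = k + 1 by omega,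
      show (2 * k + 1) / 2 = k by omega]
    have hcount := card_zeros_sum_mul_sq_of_even hF ha (Fintype.card_fin _)
    set q : ℤ := (Fintype.card F : ℤ)
    set ε := quadraticChar F ((-1) ^ (k + 1) * ∏ i, a i)
    have hε : |ε| = 1 := by
      rcases quadraticChar_dichotomy (a := (-1) ^ (k + 1) * ∏ i, a i)
        (by simp [prod_ne_zero_iff, ha]) with h | h <;> simp [ε, h]
    have hN : (#{x : Fin (2 * (k + 1)) → F | ∑ i, a i * x i ^ 2 = 0} : ℤ) - q ^ (2 * k + 1) =
        ε * ((q - 1) * q ^ k) :=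
      mul_left_cancel₀ (Nat.cast_ne_zero.mpr Fintype.card_ne_zero) (by linear_combination hcount)
    have hq : 1 ≤ q := Nat.one_le_cast.mpr Fintype.card_pos
    rw [hN, abs_mul, hε, one_mul, abs_of_nonneg (by positivity)]
    exact le_of_eq (by ring)
  · rw [card_zeros_sum_mul_sq_of_odd hF ha (by simp), Fintype.card_fin,
      show (2 * m + 1) / 2 = (2 * m + 1 - 1) / 2 by omega]
    simp
end

section
/- Let q be odd, n ≥ 2, and let r ∈ F_q* be a non-square. Then the set Q = {(x, y) ∈ F_q × F_q^{n−1} : r − ‖y‖ is a square in F_q} contains the sphere S_r(a, 0) = {(x, y) : (x − a)² + ‖y‖ = r} for every a ∈ F_q, and these q spheres are pairwise distinct. -/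
/-!
Every element of a finite field of odd order is a sum of two squares, so `r = t ^ 2 + u ^ 2`,
and `t ≠ 0` because `r` is not a square. The sphere of radius `r` centred at `(a, 0)` then
contains the two points `(a ± t, u • e₀)`. If both lie on the sphere centred at `(b, 0)`, then
`(a + t - b) ^ 2 = (a - t - b) ^ 2`, i.e. `4 t (a - b) = 0`, which forces `a = b` since the
characteristic is odd.
-/

namespace FiniteField

variable {F : Type*} [Field F] [Fintype F]

theorem two_ne_zero_of_odd_card (hq : Odd (Fintype.card F)) : (2 : F) ≠ 0 :=
  Ring.two_ne_zero fun h => by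
    simpa [Nat.odd_iff.mp hq] using (even_card_iff_char_two (F := F)).mp h

open Polynomial in
theorem exists_sq_add_sq_eq (hq : Odd (Fintype.card F)) (x : F) :
    ∃ a b : F, a ^ 2 + b ^ 2 = x := by
  obtain ⟨a, b, hab⟩ := exists_root_sum_quadratic (degree_X_pow (R := F) 2)
    (degree_X_pow_sub_C two_pos x) (Nat.odd_iff.mp hq)
  refine ⟨a, b, ?_⟩
  simp only [eval_pow, eval_X, eval_sub, eval_C] at hab
  linear_combination hab

end FiniteField

section Sphere

variable {F ι : Type*} [Field F] [Fintype ι]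

def axisSphere (a r : F) : Set (F × (ι → F)) :=
  {p | (p.1 - a) ^ 2 + ∑ i, p.2 i ^ 2 = r}

theorem axisSphere_subset_setOf_isSquare (a r : F) :
    (axisSphere a r : Set (F × (ι → F))) ⊆ {p | ∃ t : F, t ^ 2 = r - ∑ i, p.2 i ^ 2} :=
  fun p hp => ⟨p.1 - a, eq_sub_of_add_eq hp⟩

theorem sum_sq_pi_single [DecidableEq ι] (i : ι) (u : F) :
    ∑ j, Pi.single (M := fun _ => F) i u j ^ 2 = u ^ 2 := by
  simp [Pi.single_apply, ite_pow]

theorem mk_mem_axisSphere_iff [DecidableEq ι] {a r x u : F} (i : ι) :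
    (x, Pi.single i u) ∈ (axisSphere a r : Set (F × (ι → F))) ↔ (x - a) ^ 2 + u ^ 2 = r := by
  rw [axisSphere, Set.mem_ofPred_eq, sum_sq_pi_single]

theorem eq_of_axisSphere_eq [Nonempty ι] (h2 : (2 : F) ≠ 0) {a b r t u : F} (ht : t ≠ 0)
    (hr : t ^ 2 + u ^ 2 = r)
    (h : (axisSphere a r : Set (F × (ι → F))) = axisSphere b r) : a = b := by
  classical
  let i : ι := Classical.arbitrary ι
  have mem_b : ∀ s, s ^ 2 = t ^ 2 → (a + s - b) ^ 2 + u ^ 2 = r := fun s hs => by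
    rw [← mk_mem_axisSphere_iff i, ← h, mk_mem_axisSphere_iff i, add_sub_cancel_left, hs, hr]
  have h4 : (2 * 2 * t) * (a - b) = 0 := by
    linear_combination mem_b t rfl - mem_b (-t) (neg_sq t)
  simpa [h2, ht, sub_eq_zero] using h4

end Sphere

theorem stmt_9_general (F : Type*) [Field F] [Fintype F] (hq : Odd (Fintype.card F))
    (m : ℕ) (hm : 1 ≤ m) (r : F) (hns : ¬∃ t : F, t ^ 2 = r) :
    (∀ a : F, {p : F × (Fin m → F) | (p.1 - a) ^ 2 + ∑ i, p.2 i ^ 2 = r} ⊆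
        {p : F × (Fin m → F) | ∃ t : F, t ^ 2 = r - ∑ i, p.2 i ^ 2}) ∧
    (∀ a b : F, a ≠ b →
      {p : F × (Fin m → F) | (p.1 - a) ^ 2 + ∑ i, p.2 i ^ 2 = r} ≠
        {p : F × (Fin m → F) | (p.1 - b) ^ 2 + ∑ i, p.2 i ^ 2 = r}) := by
  refine ⟨axisSphere_subset_setOf_isSquare (r := r), fun a b hab h => hab ?_⟩
  obtain ⟨t, u, htu⟩ := FiniteField.exists_sq_add_sq_eq hq r
  have ht : t ≠ 0 := by
    rintro rfl
    exact hns ⟨u, by simpa using htu⟩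
  have : Nonempty (Fin m) := ⟨⟨0, hm⟩⟩
  exact eq_of_axisSphere_eq (FiniteField.two_ne_zero_of_odd_card hq) ht htu h

/-- For a non-square `r`, the set `Q` contains the sphere of radius `r` centered
at `(a, 0)` for each `a ∈ F_q`, and these `q` spheres are pairwise distinct.
Here `n = m + 1` with `m ≥ 1`. -/
theorem stmt_9 (F : Type*) [Field F] [Fintype F] (hq : Odd (Fintype.card F))
    (m : ℕ) (hm : 1 ≤ m) (r : F) (hr : r ≠ 0) (hns : ¬∃ t : F, t ^ 2 = r) :
    (∀ a : F, {p : F × (Fin m → F) | (p.1 - a) ^ 2 + ∑ i, p.2 i ^ 2 = r} ⊆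
        {p : F × (Fin m → F) | ∃ t : F, t ^ 2 = r - ∑ i, p.2 i ^ 2}) ∧
    (∀ a b : F, a ≠ b →
      {p : F × (Fin m → F) | (p.1 - a) ^ 2 + ∑ i, p.2 i ^ 2 = r} ≠
        {p : F × (Fin m → F) | (p.1 - b) ^ 2 + ∑ i, p.2 i ^ 2 = r}) :=
  stmt_9_general F hq m hm r hns
end

section
/- Let p > 2 be a prime and let m = ⌊√p⌋. Define K = {0, 1, ..., m} ∪ {−k⌈√p⌉ : k = 1, ..., m} ⊂ F_p (elements taken mod p). Then K − K = F_p and |K| ≤ 2m + 1. -/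
/-!
Put `m = ⌊√p⌋` and `c = ⌈√p⌉`, so that `p ≤ c²` and `c ≤ m + 1`. Every residue has a
representative `n < p ≤ c²`, and division with remainder by `c` writes `n = r + q c` with
`r, q < c`, i.e. `r, q ≤ m`; then `n = r - (-q c)` is a difference of two elements of `K`.
The size bound is just the number of parameters `k` used to list `K`.
-/

open Set

lemma Nat.ceil_sqrt_le_sqrt_add_one (n : ℕ) : ⌈√(n : ℝ)⌉₊ ≤ Nat.sqrt n + 1 :=
  Nat.ceil_le.mpr (by exact_mod_cast Real.real_sqrt_le_nat_sqrt_succ)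

lemma Nat.le_ceil_sqrt_mul_self (n : ℕ) : n ≤ ⌈√(n : ℝ)⌉₊ * ⌈√(n : ℝ)⌉₊ := by
  have h : (n : ℝ) ≤ ⌈√(n : ℝ)⌉₊ * ⌈√(n : ℝ)⌉₊ :=
    calc (n : ℝ) = √n * √n := (Real.mul_self_sqrt (Nat.cast_nonneg n)).symm
      _ ≤ _ := _root_.mul_self_le_mul_self (Real.sqrt_nonneg _) (Nat.le_ceil _)
  exact_mod_cast h

lemma ZMod.exists_eq_natCast_add_natCast_mul {p c m : ℕ} [NeZero p] (hpc : p ≤ c * c)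
    (hcm : c ≤ m + 1) (x : ZMod p) :
    ∃ r ≤ m, ∃ q ≤ m, x = (r : ZMod p) + ((q * c : ℕ) : ZMod p) := by
  have hc : 0 < c := Nat.pos_of_ne_zero fun h => NeZero.ne p (by simpa [h] using hpc)
  have hxc : x.val < c * c := (ZMod.val_lt x).trans_le hpc
  refine ⟨x.val % c, by have := Nat.mod_lt x.val hc; omega, x.val / c, ?_, ?_⟩
  · have := Nat.div_lt_of_lt_mul hxc; omega
  · rw [← Nat.cast_add, Nat.mod_add_div', ZMod.natCast_zmod_val]

theorem stmt_16_general (p : ℕ) [Fact p.Prime] (K : Set (ZMod p))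
    (hK : K = {x : ZMod p | ∃ k : ℕ, k ≤ Nat.sqrt p ∧ x = (k : ZMod p)} ∪
      {x : ZMod p | ∃ k : ℕ, 1 ≤ k ∧ k ≤ Nat.sqrt p ∧
        x = -((k * ⌈Real.sqrt p⌉₊ : ℕ) : ZMod p)}) :
    {x : ZMod p | ∃ x₁ ∈ K, ∃ x₂ ∈ K, x = x₁ - x₂} = Set.univ ∧
      K.ncard ≤ 2 * Nat.sqrt p + 1 := by
  set m := Nat.sqrt p
  set c := ⌈√(p : ℝ)⌉₊
  have hK_image : K = (fun k : ℕ => (k : ZMod p)) '' Iic m ∪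
      (fun k : ℕ => -((k * c : ℕ) : ZMod p)) '' Icc 1 m := by
    rw [hK]; ext; simp [eq_comm, and_assoc]
  constructor
  · refine eq_univ_of_forall fun x => ?_
    obtain ⟨r, hr, q, hq, rfl⟩ := ZMod.exists_eq_natCast_add_natCast_mul
      (Nat.le_ceil_sqrt_mul_self p) (Nat.ceil_sqrt_le_sqrt_add_one p) x
    refine ⟨r, ?_, -((q * c : ℕ) : ZMod p), ?_, by ring⟩ <;> rw [hK_image]
    · exact Or.inl ⟨r, hr, rfl⟩
    · rcases q.eq_zero_or_pos with rfl | hq0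
      · exact Or.inl ⟨0, Nat.zero_le m, by simp⟩
      · exact Or.inr ⟨q, ⟨hq0, hq⟩, rfl⟩
  · calc K.ncard
        ≤ (Iic m).ncard + (Icc 1 m).ncard := by
          rw [hK_image]
          exact (ncard_union_le _ _).trans (add_le_add ncard_image_le ncard_image_le)
      _ = 2 * m + 1 := by rw [ncard_Iic_nat, ncard_Icc_nat]; omega

/-- The explicit radius circular Kakeya set in `F_p` of size at most `2⌊√p⌋+1`. -/
theorem stmt_16 (p : ℕ) [Fact p.Prime] (hp : 2 < p) (K : Set (ZMod p))
    (hK : K = {x : ZMod p | ∃ k : ℕ, k ≤ Nat.sqrt p ∧ x = (k : ZMod p)} ∪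
      {x : ZMod p | ∃ k : ℕ, 1 ≤ k ∧ k ≤ Nat.sqrt p ∧
        x = -((k * ⌈Real.sqrt p⌉₊ : ℕ) : ZMod p)}) :
    {x : ZMod p | ∃ x₁ ∈ K, ∃ x₂ ∈ K, x = x₁ - x₂} = Set.univ ∧
      K.ncard ≤ 2 * Nat.sqrt p + 1 :=
  stmt_16_general p K hK
end

section
/- Let q = r² be a square of an odd prime power and let α be a defining element of F_q over F_r, i.e., F_q = F_r(α). Then the set K = F_r ∪ αF_r ⊂ F_q satisfies K − K = F_q and |K| = 2√q − 1. -/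
/-!
Since `|F| = |F_r|²`, `F` is a plane over `F_r`, and `α ∉ F_r` because it generates `F`. Hence
`{1, α}` is a basis and every `x` is `a + α b = a - α (-b)` with `a, b ∈ F_r`. The two lines
`F_r` and `α F_r` meet only in `0`, so `|K| = 2r - 1`.
-/

theorem Module.finrank_eq_of_card_eq_pow {K V : Type*} [DivisionRing K] [AddCommGroup V]
    [Module K V] [Fintype K] [Fintype V] {n : ℕ} (h : Fintype.card V = Fintype.card K ^ n) :
    Module.finrank K V = n :=
  Nat.pow_right_injective Fintype.one_lt_card (Module.card_eq_pow_finrank.symm.trans h)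

section

variable {K L : Type*} [Field K] [Field L] [Algebra K L]

theorem notMem_range_algebraMap_of_adjoin_eq_top {α : L} (hα : Algebra.adjoin K {α} = ⊤)
    (hrank : Module.finrank K L ≠ 1) : α ∉ Set.range (algebraMap K L) := fun hmem =>
  hrank <| Subalgebra.bot_eq_top_iff_finrank_eq_one.mp <|
    top_le_iff.mp (hα ▸ Algebra.adjoin_singleton_le (Algebra.mem_bot.mpr hmem))

theorem exists_algebraMap_add_mul_algebraMap_eq (hrank : Module.finrank K L = 2) {α : L}
    (hα : α ∉ Set.range (algebraMap K L)) (x : L) :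
    ∃ a b : K, algebraMap K L a + α * algebraMap K L b = x := by
  have hli : LinearIndependent K ![(1 : L), α] :=
    (LinearIndependent.pair_iff' one_ne_zero).mpr fun a ha =>
      hα ⟨a, by rwa [Algebra.algebraMap_eq_smul_one]⟩
  have hspan : Submodule.span K {(1 : L), α} = ⊤ := by
    simpa [Matrix.range_cons, Matrix.range_empty, Set.union_singleton, Set.pair_comm] using
      hli.span_eq_top_of_card_eq_finrank (by simp [hrank])
  obtain ⟨a, b, hab⟩ := Submodule.mem_span_pair.mp (hspan ▸ Submodule.mem_top : x ∈ _)
  exact ⟨a, b, by rw [← hab, Algebra.smul_def, Algebra.smul_def, mul_one, mul_comm α]⟩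

theorem range_algebraMap_inter_range_mul_algebraMap {α : L}
    (hα : α ∉ Set.range (algebraMap K L)) :
    Set.range (algebraMap K L) ∩ Set.range (fun t : K => α * algebraMap K L t) = {0} := by
  refine Set.eq_singleton_iff_unique_mem.mpr ⟨⟨⟨0, map_zero _⟩, ⟨0, by simp⟩⟩, ?_⟩
  rintro x ⟨⟨a, rfl⟩, ⟨b, hb⟩⟩
  by_contra ha
  have hb0 : b ≠ 0 := by rintro rfl; exact ha (by simpa using hb.symm)
  exact hα ⟨a * b⁻¹, by rw [map_mul, map_inv₀, ← hb, mul_inv_cancel_right₀ (by simpa using hb0)]⟩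

theorem ncard_range_algebraMap_union_range_mul_algebraMap [Finite K] {α : L}
    (hα : α ∉ Set.range (algebraMap K L)) :
    (Set.range (algebraMap K L) ∪ Set.range (fun t : K => α * algebraMap K L t)).ncard =
      2 * Nat.card K - 1 := by
  have hα0 : α ≠ 0 := fun h => hα ⟨0, by simp [h]⟩
  have hinj := (algebraMap K L).injective
  have key := Set.ncard_union_add_ncard_inter (Set.range (algebraMap K L))
    (Set.range (fun t : K => α * algebraMap K L t))
  rw [range_algebraMap_inter_range_mul_algebraMap hα, Set.ncard_singleton,
    Set.ncard_range_of_injective hinj,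
    Set.ncard_range_of_injective fun a b h => hinj (mul_left_cancel₀ hα0 h)] at key
  omega

end

theorem stmt_17_general (Fr F : Type*) [Field Fr] [Field F] [Fintype Fr] [Fintype F]
    [Algebra Fr F]
    (hcard : Fintype.card F = Fintype.card Fr ^ 2)
    (α : F) (hα : Algebra.adjoin Fr {α} = ⊤)
    (K : Set F)
    (hK : K = Set.range (algebraMap Fr F) ∪ Set.range (fun t : Fr => α * algebraMap Fr F t)) :
    {x : F | ∃ x₁ ∈ K, ∃ x₂ ∈ K, x = x₁ - x₂} = Set.univ ∧
      K.ncard = 2 * Fintype.card Fr - 1 := by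
  have hrank : Module.finrank Fr F = 2 := Module.finrank_eq_of_card_eq_pow hcard
  have hαFr : α ∉ Set.range (algebraMap Fr F) :=
    notMem_range_algebraMap_of_adjoin_eq_top hα (by omega)
  subst hK
  refine ⟨Set.eq_univ_of_forall fun x => ?_, ?_⟩
  · obtain ⟨a, b, rfl⟩ := exists_algebraMap_add_mul_algebraMap_eq hrank hαFr x
    exact ⟨_, Or.inl ⟨a, rfl⟩, _, Or.inr ⟨-b, rfl⟩, by simp⟩
  · rw [ncard_range_algebraMap_union_range_mul_algebraMap hαFr, Nat.card_eq_fintype_card]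

/-- For `q = r²`, the set `K = F_r ∪ αF_r` satisfies `K - K = F_q` and has size
`2√q - 1 = 2r - 1`. -/
theorem stmt_17 (Fr F : Type*) [Field Fr] [Field F] [Fintype Fr] [Fintype F]
    [Algebra Fr F] (hodd : Odd (Fintype.card F))
    (hcard : Fintype.card F = Fintype.card Fr ^ 2)
    (α : F) (hα : Algebra.adjoin Fr {α} = ⊤)
    (K : Set F)
    (hK : K = Set.range (algebraMap Fr F) ∪ Set.range (fun t : Fr => α * algebraMap Fr F t)) :
    {x : F | ∃ x₁ ∈ K, ∃ x₂ ∈ K, x = x₁ - x₂} = Set.univ ∧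
      K.ncard = 2 * Fintype.card Fr - 1 :=
  stmt_17_general Fr F hcard α hα K hK
end

section
/- For every odd prime power q there exists a set K ⊂ F_q with K − K = F_q and |K| < 6√q. -/
/-!
Additively `F ≅ 𝔽ₚⁿ`; split it as `U × 𝔽ₚ^r × U` with `|U| = p^⌊n/2⌋` and `r ≤ 1`. If `S - T` covers
the middle factor, then `K = (U × S × 0) ∪ (0 × T × U)` satisfies `K - K = F` and
`|K| ≤ |U| (|S| + |T|)`. For `r = 1` take `S = {0, …, s - 1}`, `T = {0, -s, …, -(s - 1) s}` with
`s = ⌊√p⌋ + 1`, so `|K| ≤ 2 (√p + 1) p^⌊n/2⌋ ≤ 4 √q`.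
-/

open Set Pointwise Module

lemma ZMod.exists_sub_eq_univ_ncard_le_sqrt_succ (m : ℕ) [NeZero m] :
    ∃ S T : Set (ZMod m), S - T = univ ∧ S.ncard ≤ m.sqrt + 1 ∧ T.ncard ≤ m.sqrt + 1 := by
  set s := m.sqrt + 1
  refine ⟨(Finset.range s).image (fun a : ℕ => (a : ZMod m)),
    (Finset.range s).image (fun j : ℕ => -((j * s : ℕ) : ZMod m)), ?_, ?_, ?_⟩
  · refine eq_univ_of_forall fun c => Set.mem_sub.2 ?_
    have hlt : c.val / s < s := Nat.div_lt_of_lt_mul <| (ZMod.val_lt c).trans (Nat.lt_succ_sqrt m)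
    refine ⟨c.val % s, by simpa using ⟨_, Nat.mod_lt _ m.sqrt.succ_pos, rfl⟩,
      -((c.val / s * s : ℕ) : ZMod m), by simpa using ⟨_, hlt, rfl⟩, ?_⟩
    rw [sub_neg_eq_add, ← Nat.cast_add, Nat.mod_add_div', ZMod.natCast_zmod_val]
  all_goals
    rw [Set.ncard_coe_finset]
    exact Finset.card_image_le.trans (Finset.card_range s).le

lemma exists_prod_sub_eq_univ {U C V : Type*} [AddGroup U] [AddGroup C] [AddGroup V]
    {S T : Set C} (h : S - T = univ) :
    ∃ K : Set (U × C × V), K - K = univ ∧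
      K.ncard ≤ Nat.card U * S.ncard + T.ncard * Nat.card V := by
  refine ⟨univ ×ˢ S ×ˢ {0} ∪ {0} ×ˢ T ×ˢ univ, eq_univ_of_univ_subset ?_, ?_⟩
  · calc (univ : Set (U × C × V)) = univ ×ˢ S ×ˢ {0} - {0} ×ˢ T ×ˢ univ := by
          simp [neg_surjective.range_eq, h]
      _ ⊆ _ := sub_subset_sub subset_union_left subset_union_right
  · refine (ncard_union_le _ _).trans_eq ?_
    simp [ncard_prod]

lemma AddEquiv.exists_sub_eq_univ_ncard_eq {G H : Type*} [AddGroup G] [AddGroup H] (e : G ≃+ H)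
    {K : Set H} (hK : K - K = univ) : ∃ K' : Set G, K' - K' = univ ∧ K'.ncard = K.ncard :=
  ⟨e.symm '' K, by rw [← image_sub, hK, image_univ_of_surjective e.symm.surjective],
    ncard_image_of_injective _ e.symm.injective⟩

lemma exists_sub_eq_univ_of_finrank_eq {𝕜 V C : Type*} [DivisionRing 𝕜] [AddCommGroup V]
    [Module 𝕜 V] [AddCommGroup C] [Module 𝕜 C] [Module.Finite 𝕜 V] [Module.Finite 𝕜 C] {k : ℕ}
    (hV : finrank 𝕜 V = k + finrank 𝕜 C + k) {S T : Set C} (h : S - T = univ) :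
    ∃ K : Set V, K - K = univ ∧ K.ncard ≤ Nat.card 𝕜 ^ k * (S.ncard + T.ncard) := by
  let e := LinearEquiv.ofFinrankEq V ((Fin k → 𝕜) × C × (Fin k → 𝕜))
    (by rw [hV, finrank_prod, finrank_prod, finrank_fin_fun, add_assoc])
  obtain ⟨K, hK, hcard⟩ := exists_prod_sub_eq_univ (U := Fin k → 𝕜) (V := Fin k → 𝕜) h
  obtain ⟨K', hK', hK'card⟩ := e.toAddEquiv.exists_sub_eq_univ_ncard_eq hK
  refine ⟨K', hK', hK'card ▸ hcard.trans_eq ?_⟩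
  simp only [Nat.card_fun, Nat.card_fin]
  ring

theorem exists_sub_eq_univ_ncard_le_four_mul_sqrt (p : ℕ) [Fact p.Prime] (V : Type*)
    [AddCommGroup V] [Module (ZMod p) V] [Finite V] :
    ∃ K : Set V, K - K = univ ∧ (K.ncard : ℝ) ≤ 4 * √(Nat.card V) := by
  rw [natCard_eq_pow_finrank (K := ZMod p), Nat.card_zmod]
  obtain ⟨k, hk | hk⟩ := Nat.even_or_odd' (finrank (ZMod p) V)
  · obtain ⟨K, hK, hcard⟩ := exists_sub_eq_univ_of_finrank_eq (𝕜 := ZMod p) (V := V)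
      (C := Unit) (k := k) (by rw [hk, finrank_zero_of_subsingleton]; ring)
      (S := univ) (T := univ) (by simp)
    refine ⟨K, hK, ?_⟩
    have hsqrt : √((p : ℝ) ^ finrank (ZMod p) V) = p ^ k := by
      rw [hk, pow_mul', Real.sqrt_sq (by positivity)]
    rw [Nat.cast_pow, hsqrt]
    have hK : (K.ncard : ℝ) ≤ p ^ k * 2 := by exact_mod_cast (by simpa using hcard)
    linarith [pow_nonneg (Nat.cast_nonneg p : (0 : ℝ) ≤ p) k]
  · obtain ⟨S, T, hST, hS, hT⟩ := ZMod.exists_sub_eq_univ_ncard_le_sqrt_succ p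
    obtain ⟨K, hK, hcard⟩ := exists_sub_eq_univ_of_finrank_eq (𝕜 := ZMod p) (V := V)
      (C := ZMod p) (k := k) (by simp [hk]; ring) hST
    refine ⟨K, hK, ?_⟩
    have hsqrt : √((p : ℝ) ^ finrank (ZMod p) V) = p ^ k * √p := by
      rw [hk, pow_succ, pow_mul', Real.sqrt_mul (by positivity), Real.sqrt_sq (by positivity)]
    rw [Nat.cast_pow, hsqrt]
    have hK : (K.ncard : ℝ) ≤ p ^ k * (2 * (p.sqrt + 1)) := by
      simp only [Nat.card_zmod] at hcard
      exact_mod_cast hcard.trans (Nat.mul_le_mul_left _ (by omega))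
    have hp : (1 : ℝ) ≤ p := mod_cast (Fact.out : p.Prime).one_le
    calc (K.ncard : ℝ) ≤ p ^ k * (2 * (p.sqrt + 1)) := hK
      _ ≤ p ^ k * (2 * (2 * √p)) := by
        gcongr
        linarith [Real.nat_sqrt_le_real_sqrt (a := p), Real.one_le_sqrt.2 hp]
      _ = 4 * (p ^ k * √p) := by ring

theorem stmt_19_general (F : Type*) [Field F] [Fintype F] :
    ∃ K : Set F, {x : F | ∃ x₁ ∈ K, ∃ x₂ ∈ K, x = x₁ - x₂} = Set.univ ∧
      (K.ncard : ℝ) < 6 * Real.sqrt (Fintype.card F) := by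
  obtain ⟨p, hchar⟩ := CharP.exists F
  have : Fact p.Prime := ⟨CharP.char_is_prime F p⟩
  let := ZMod.algebra F p
  obtain ⟨K, hK, hcard⟩ := exists_sub_eq_univ_ncard_le_four_mul_sqrt p F
  refine ⟨K, ?_, ?_⟩
  · simpa [Set.ext_iff, Set.mem_sub, eq_comm] using hK
  · rw [Nat.card_eq_fintype_card] at hcard
    have : 0 < Real.sqrt (Fintype.card F) := Real.sqrt_pos.2 (mod_cast Fintype.card_pos)
    linarith

/-- For every odd prime power `q` there is a radius circular Kakeya set in `F_q`
of size less than `6√q`. -/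
theorem stmt_19 (F : Type*) [Field F] [Fintype F] (hq : Odd (Fintype.card F)) :
    ∃ K : Set F, {x : F | ∃ x₁ ∈ K, ∃ x₂ ∈ K, x = x₁ - x₂} = Set.univ ∧
      (K.ncard : ℝ) < 6 * Real.sqrt (Fintype.card F) :=
  stmt_19_general F
end
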